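/- arXiv:1501.05103 — 4 statements merged into one kernel-verified Lean document; each statement's English description precedes it below -/
import Mathlib

section
/- Let f : ℝ → ℝ be locally Lipschitz and suppose there exist a ≤ b with f(a) ≥ f(s) ≥ f(b) for all s ∈ [a,b] and f(s) = f(a) for s ≤ a, f(s) = f(b) for s ≥ b. Let u ∈ C^1([0,T); L^∞(Ω)) solve u_t = f(u) - ⟨f(u)⟩ with a ≤ u_0(x) ≤ b a.e. Then a ≤ u(x,t) ≤ b for a.e. x ∈ Ω and every t ∈ [0,T). -/
/-!
Since `f` is flat outside `[a, b]`, `f b ≤ f ≤ f a` everywhere, so the spatial average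
`⟨f(u)⟩` always lies in `[f b, f a]`. Hence at each point `x` the scalar ODE
`v' = f(v) - ⟨f(u)⟩` has `v' ≤ 0` whenever `v ≥ b` and `v' ≥ 0` whenever `v ≤ a`,
so `[a, b]` is a trapping region.
-/

open Set Filter Topology MeasureTheory

theorem le_of_hasDerivWithinAt_nonpos_of_le {v v' : ℝ → ℝ} {t₀ t₁ b : ℝ}
    (hv : ContinuousOn v (Icc t₀ t₁))
    (hv' : ∀ s ∈ Ico t₀ t₁, HasDerivWithinAt v (v' s) (Ici s) s)
    (hb : ∀ s ∈ Ico t₀ t₁, b ≤ v s → v' s ≤ 0) (h₀ : v t₀ ≤ b) :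
    ∀ ⦃t⦄, t ∈ Icc t₀ t₁ → v t ≤ b := by
  intro t ht
  -- compare with the strict barriers `b + ε (s - t₀)` and let `ε → 0⁺`
  have hbarrier : ∀ ε > 0, v t ≤ b + ε * (t - t₀) := by
    intro ε hε
    refine image_le_of_deriv_right_lt_deriv_boundary (B := fun s => b + ε * (s - t₀)) hv hv'
      (by simpa using h₀)
      (fun s => by simpa using ((hasDerivAt_id s).sub_const t₀).const_mul ε |>.const_add b) ?_ ht
    intro s hs hvs
    have : b ≤ v s := by rw [hvs]; nlinarith [hs.1]
    linarith [hb s hs this]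
  have hlim : Tendsto (fun ε : ℝ => b + ε * (t - t₀)) (𝓝[>] 0) (𝓝 b) := by
    refine tendsto_nhdsWithin_of_tendsto_nhds ?_
    simpa using (by fun_prop : Continuous fun ε : ℝ => b + ε * (t - t₀)).tendsto 0
  exact ge_of_tendsto hlim (eventually_nhdsWithin_of_forall hbarrier)
/-- Two-sided version on `[t₀, T)`: `[a, b]` is forward invariant when `v'` points inward
at and beyond both ends. -/
theorem mem_Icc_of_hasDerivAt {v v' : ℝ → ℝ} {t₀ T a b : ℝ}
    (hv : ∀ s ∈ Ico t₀ T, HasDerivAt v (v' s) s)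
    (ha : ∀ s ∈ Ico t₀ T, v s ≤ a → 0 ≤ v' s)
    (hb : ∀ s ∈ Ico t₀ T, b ≤ v s → v' s ≤ 0)
    (h₀ : v t₀ ∈ Icc a b) : ∀ t ∈ Ico t₀ T, v t ∈ Icc a b := by
  intro t ht
  have hsub : Icc t₀ t ⊆ Ico t₀ T := Icc_subset_Ico_right ht.2
  have hsub' : Ico t₀ t ⊆ Ico t₀ T := Ico_subset_Ico_right ht.2.le
  have hcont : ContinuousOn v (Icc t₀ t) := fun s hs =>
    (hv s (hsub hs)).continuousAt.continuousWithinAt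
  have hmem : t ∈ Icc t₀ t := ⟨ht.1, le_rfl⟩
  constructor
  · have := le_of_hasDerivWithinAt_nonpos_of_le (v := fun s => -v s) (b := -a) hcont.neg
      (fun s hs => (hv s (hsub' hs)).neg.hasDerivWithinAt)
      (fun s hs has => neg_nonpos.2 (ha s (hsub' hs) (neg_le_neg_iff.1 has)))
      (neg_le_neg h₀.1) hmem
    exact neg_le_neg_iff.1 this
  · exact le_of_hasDerivWithinAt_nonpos_of_le hcont
      (fun s hs => (hv s (hsub' hs)).hasDerivWithinAt) (fun s hs => hb s (hsub' hs)) h₀.2 hmem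

theorem setAverage_mem_Icc {X : Type*} [MeasurableSpace X] {μ : Measure X} {s : Set X}
    {g : X → ℝ} {c d : ℝ} (hg : AEStronglyMeasurable g μ) (h0 : μ s ≠ 0)
    (hfin : μ s ≠ ⊤)
    (hgs : ∀ᵐ x ∂μ.restrict s, g x ∈ Icc c d) : ⨍ x in s, g x ∂μ ∈ Icc c d :=
  (convex_Icc c d).set_average_mem isClosed_Icc h0 hfin hgs <|
    Measure.integrableOn_of_bounded hfin hg (M := max |c| |d|)
      (hgs.mono fun _ hx => abs_le_max_abs_abs hx.1 hx.2)

theorem apply_mem_Icc_of_flat_outside {f : ℝ → ℝ} {a b : ℝ} (hab : a ≤ b)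
    (hmid : ∀ s ∈ Icc a b, f b ≤ f s ∧ f s ≤ f a)
    (hflatl : ∀ s ≤ a, f s = f a) (hflatr : ∀ s, b ≤ s → f s = f b) (s : ℝ) :
    f s ∈ Icc (f b) (f a) := by
  have hfab : f b ≤ f a := (hmid a ⟨le_rfl, hab⟩).1
  rcases le_total s a with hsa | has
  · rw [hflatl s hsa]; exact ⟨hfab, le_rfl⟩
  rcases le_total s b with hsb | hbs
  · exact hmid s ⟨has, hsb⟩
  · rw [hflatr s hbs]; exact ⟨le_rfl, hfab⟩

theorem stmt3_general {N : ℕ} (Ω : Set (Fin N → ℝ)) (hΩo : IsOpen Ω)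
    (hΩb : Bornology.IsBounded Ω) (hΩpos : 0 < volume Ω)
    (f : ℝ → ℝ) (hf : LocallyLipschitz f)
    (a b : ℝ) (hab : a ≤ b)
    (hmid : ∀ s ∈ Icc a b, f b ≤ f s ∧ f s ≤ f a)
    (hflatl : ∀ s ≤ a, f s = f a) (hflatr : ∀ s, b ≤ s → f s = f b)
    (T : ℝ) (u : ℝ → (Fin N → ℝ) → ℝ)
    (hmeas : Measurable (Function.uncurry u))
    (hode : ∀ x ∈ Ω, ∀ t ∈ Ico (0 : ℝ) T,
      HasDerivAt (fun τ => u τ x) (f (u t x) - ⨍ y in Ω, f (u t y)) t)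
    (hinit : ∀ᵐ x ∂(volume.restrict Ω), a ≤ u 0 x ∧ u 0 x ≤ b) :
    ∀ t ∈ Ico (0 : ℝ) T,
      ∀ᵐ x ∂(volume.restrict Ω), a ≤ u t x ∧ u t x ≤ b := by
  have hf_range := apply_mem_Icc_of_flat_outside hab hmid hflatl hflatr
  have hf_meas (t : ℝ) : Measurable fun y => f (u t y) :=
    hf.continuous.measurable.comp (hmeas.comp measurable_prodMk_left)
  have havg (t : ℝ) : ⨍ y in Ω, f (u t y) ∈ Icc (f b) (f a) :=
    setAverage_mem_Icc (hf_meas t).aestronglyMeasurable hΩpos.ne' hΩb.measure_lt_top.ne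
      (ae_of_all _ fun y => hf_range (u t y))
  intro t ht
  filter_upwards [hinit, ae_restrict_mem hΩo.measurableSet] with x hx₀ hxΩ
  refine mem_Icc_of_hasDerivAt (hode x hxΩ) (fun s _ hsa => ?_) (fun s _ hbs => ?_) hx₀ t ht
  · rw [hflatl _ hsa]; linarith [(havg s).2]
  · rw [hflatr _ hbs]; linarith [(havg s).1]

/-- Invariance of the interval `[a,b]`: if `f(a) ≥ f(s) ≥ f(b)` on `[a,b]` and
`f` is flat outside `[a,b]`, then solutions of `u_t = f(u) - ⟨f(u)⟩` starting
in `[a,b]` a.e. stay in `[a,b]` a.e. -/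
theorem stmt3 {N : ℕ} (Ω : Set (Fin N → ℝ)) (hΩo : IsOpen Ω)
    (hΩb : Bornology.IsBounded Ω) (hΩpos : 0 < volume Ω)
    (f : ℝ → ℝ) (hf : LocallyLipschitz f)
    (a b : ℝ) (hab : a ≤ b)
    (hmid : ∀ s ∈ Icc a b, f b ≤ f s ∧ f s ≤ f a)
    (hflatl : ∀ s ≤ a, f s = f a) (hflatr : ∀ s, b ≤ s → f s = f b)
    (T : ℝ) (hT : 0 < T) (u : ℝ → (Fin N → ℝ) → ℝ)
    (hmeas : Measurable (Function.uncurry u))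
    (C : ℝ) (hbd : ∀ t ∈ Ico (0 : ℝ) T, ∀ x ∈ Ω, |u t x| ≤ C)
    (hode : ∀ x ∈ Ω, ∀ t ∈ Ico (0 : ℝ) T,
      HasDerivAt (fun τ => u τ x) (f (u t x) - ⨍ y in Ω, f (u t y)) t)
    (hinit : ∀ᵐ x ∂(volume.restrict Ω), a ≤ u 0 x ∧ u 0 x ≤ b) :
    ∀ t ∈ Ico (0 : ℝ) T,
      ∀ᵐ x ∂(volume.restrict Ω), a ≤ u t x ∧ u t x ≤ b :=
  stmt3_general Ω hΩo hΩb hΩpos f hf a b hab hmid hflatl hflatr T u hmeas hode hinit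
end

section
/- Let f satisfy: f ∈ C^1(ℝ), f' < 0 on (-∞,m) ∪ (M,∞), f' > 0 on (m,M), and let s_* < m < M < s^* satisfy f(s_*) = f(M), f(s^*) = f(m). Let u be the global solution of u_t = f(u) - ⟨f(u)⟩ with u_0 ∈ L^∞(Ω). If s_* ≤ u(x,t_1) ≤ s^* a.e. for some t_1 ≥ 0, then s_* ≤ u(x,t) ≤ s^* a.e. for all t ≥ t_1. -/
/-!
Let `w = (u - s^*)⁺ + (s_* - u)⁺` be the excess of `u` over `[s_*, s^*]` and `E(t) = ⟨w(·, t)⟩`.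
The shape of `f` gives `f ≤ f(m)` above `s^*`, `f ≥ f(M)` below `s_*`, and `f([s_*, s^*]) ⊆
[f(m), f(M)]`; since `f` is `L`-Lipschitz on the range of `u`, the mean `⟨f(u)⟩` therefore lies
within `L E(t)` of `[f(m), f(M)]`. So no trajectory leaves `[s_*, s^*]` faster than `L E(t)`,
i.e. `w(x, t) ≤ L ∫_{t₁}^t E` wherever `w(x, t₁) = 0`. Averaging gives `E(t) ≤ L ∫_{t₁}^t E`,
and Grönwall's inequality forces `E ≡ 0`.
-/

open Set Filter Topology MeasureTheory

def excess (a b y : ℝ) : ℝ := max (y - b) 0 + max (a - y) 0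

section Excess

variable {a b : ℝ}

lemma excess_nonneg (a b y : ℝ) : 0 ≤ excess a b y :=
  add_nonneg (le_max_right _ _) (le_max_right _ _)

lemma excess_eq_zero_iff {y : ℝ} : excess a b y = 0 ↔ y ∈ Icc a b := by
  simp only [excess, mem_Icc]
  constructor
  · intro h
    constructor <;> linarith [le_max_left (y - b) 0, le_max_left (a - y) 0,
      le_max_right (y - b) 0, le_max_right (a - y) 0]
  · rintro ⟨hay, hyb⟩
    rw [max_eq_right (by linarith), max_eq_right (by linarith), add_zero]

lemma excess_neg (y : ℝ) : excess a b (-y) = excess (-b) (-a) y := by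
  simp only [excess]; ring_nf

lemma excess_of_le (hab : a ≤ b) {y : ℝ} (hy : b ≤ y) : excess a b y = y - b := by
  simp only [excess]; rw [max_eq_left (by linarith), max_eq_right (by linarith), add_zero]

lemma excess_of_ge (hab : a ≤ b) {y : ℝ} (hy : y ≤ a) : excess a b y = a - y := by
  simp only [excess]; rw [max_eq_right (by linarith), max_eq_left (by linarith), zero_add]

lemma continuous_excess : Continuous (excess a b) := by
  unfold excess; fun_prop

lemma excess_sub_le (hab : a ≤ b) {y₀ y : ℝ} (hy₀ : b ≤ y₀) (hy : a ≤ y) :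
    excess a b y - excess a b y₀ ≤ max (y - y₀) 0 := by
  rw [excess_of_le hab hy₀, excess, max_eq_right (a := a - y) (by linarith), add_zero,
    ← max_sub_sub_right]
  exact max_le_max (by linarith) (by linarith)

end Excess

section Slope

variable {a b : ℝ} {g : ℝ → ℝ} {g' r s : ℝ}

lemma eventually_slope_excess_comp_lt_of_le (hab : a < b) (hg : HasDerivAt g g' s)
    (hgs : b ≤ g s) (hr : 0 < r) (hg' : g' < r) :
    ∀ᶠ z in 𝓝[>] s, slope (excess a b ∘ g) s z < r := by
  have hslope : Tendsto (slope g s) (𝓝[>] s) (𝓝 g') :=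
    hg.tendsto_slope.mono_left (nhdsWithin_mono _ fun z hz => ne_of_gt hz)
  have hga : ∀ᶠ z in 𝓝[>] s, a ≤ g z :=
    nhdsWithin_le_nhds (hg.continuousAt.eventually_const_le (by linarith))
  filter_upwards [hslope.eventually_lt_const hg', hga, self_mem_nhdsWithin]
    with z hz hgz (hsz : s < z)
  rw [slope_def_field] at hz ⊢
  have hpos : 0 < z - s := sub_pos.2 hsz
  calc (excess a b (g z) - excess a b (g s)) / (z - s)
      ≤ max (g z - g s) 0 / (z - s) := by
        gcongr; exact excess_sub_le hab.le hgs hgz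
    _ = max ((g z - g s) / (z - s)) 0 := by rw [← max_div_div_right hpos.le, zero_div]
    _ < r := max_lt hz hr

lemma frequently_slope_excess_comp_lt (hab : a < b) (hg : HasDerivAt g g' s) (hr : 0 < r)
    (hup : b ≤ g s → g' < r) (hlo : g s ≤ a → -g' < r) :
    ∃ᶠ z in 𝓝[>] s, slope (excess a b ∘ g) s z < r := by
  refine Eventually.frequently ?_
  rcases le_or_gt b (g s) with hb | hb
  · exact eventually_slope_excess_comp_lt_of_le hab hg hb hr (hup hb)
  rcases le_or_gt (g s) a with ha | ha
  · have hreflect : excess a b ∘ g = excess (-b) (-a) ∘ (fun z => -g z) := by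
      ext z; simp [excess_neg]
    rw [hreflect]
    exact eventually_slope_excess_comp_lt_of_le (neg_lt_neg hab) hg.neg (by simpa using ha) hr
      (hlo ha)
  · have hin : ∀ᶠ z in 𝓝 s, g z ∈ Icc a b :=
      hg.continuousAt.preimage_mem_nhds (Icc_mem_nhds ha hb)
    filter_upwards [nhdsWithin_le_nhds hin] with z hz
    simp [slope_def_field, excess_eq_zero_iff.2 hz, excess_eq_zero_iff.2 ⟨ha.le, hb.le⟩, hr]

end Slope

theorem excess_comp_le_of_hasDerivAt {a b : ℝ} {v v' e G : ℝ → ℝ} {t₀ T : ℝ} (hab : a < b)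
    (hv : ∀ t ∈ Icc t₀ T, HasDerivAt v (v' t) t)
    (hup : ∀ t ∈ Ico t₀ T, b ≤ v t → v' t ≤ e t)
    (hlo : ∀ t ∈ Ico t₀ T, v t ≤ a → -v' t ≤ e t) (he : ∀ t ∈ Ico t₀ T, 0 ≤ e t)
    (hG : ∀ t ∈ Ico t₀ T, HasDerivWithinAt G (e t) (Ici t) t) (hGc : ContinuousOn G (Icc t₀ T))
    (h₀ : excess a b (v t₀) ≤ G t₀) :
    ∀ t ∈ Icc t₀ T, excess a b (v t) ≤ G t := by
  have hcont : ContinuousOn (excess a b ∘ v) (Icc t₀ T) := fun t ht =>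
    (continuous_excess.continuousAt.comp (hv t ht).continuousAt).continuousWithinAt
  refine image_le_of_liminf_slope_right_le_deriv_boundary hcont h₀ hGc hG fun t ht r hr => ?_
  exact frequently_slope_excess_comp_lt hab (hv t (Ico_subset_Icc_self ht))
    ((he t ht).trans_lt hr) (fun h => (hup t ht h).trans_lt hr) fun h => (hlo t ht h).trans_lt hr

section Primitive

variable {E : ℝ → ℝ} {a b : ℝ}

lemma ContinuousOn.continuousOn_intervalPrimitive (hc : ContinuousOn E (Icc a b)) :
    ContinuousOn (fun t => ∫ σ in a..t, E σ) (Icc a b) := by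
  rcases le_or_gt a b with hab | hab
  · have hint : IntegrableOn E (uIcc a b) volume := by
      simpa only [uIcc_of_le hab] using hc.integrableOn_Icc
    simpa only [uIcc_of_le hab] using intervalIntegral.continuousOn_primitive_interval hint
  · simp [Icc_eq_empty_of_lt hab]

lemma ContinuousOn.hasDerivWithinAt_intervalPrimitive_Ici (hc : ContinuousOn E (Icc a b))
    {s : ℝ} (hs : s ∈ Ico a b) :
    HasDerivWithinAt (fun t => ∫ σ in a..t, E σ) (E s) (Ici s) s := by
  have hnhds : Ioc s b ∈ 𝓝[>] s := Ioc_mem_nhdsGT hs.2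
  have hsub : Ioc s b ⊆ Icc a b := fun σ hσ => ⟨hs.1.trans hσ.1.le, hσ.2⟩
  refine intervalIntegral.integral_hasDerivWithinAt_right ?_
    ⟨Ioc s b, hnhds, (hc.mono hsub).aestronglyMeasurable measurableSet_Ioc⟩
    ((hc s (Ico_subset_Icc_self hs)).mono_of_mem_nhdsWithin (mem_of_superset hnhds hsub))
  exact (hc.mono (uIcc_of_le hs.1 ▸ Icc_subset_Icc_right hs.2.le)).intervalIntegrable

theorem eq_zero_of_le_mul_integral {K : ℝ} (hc : ContinuousOn E (Icc a b))
    (h0 : ∀ s ∈ Icc a b, 0 ≤ E s) (hle : ∀ s ∈ Icc a b, E s ≤ K * ∫ σ in a..s, E σ) :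
    ∀ s ∈ Icc a b, E s = 0 := by
  set F : ℝ → ℝ := fun s => ∫ σ in a..s, E σ
  have hF0 : ∀ s ∈ Icc a b, 0 ≤ F s := fun s hs =>
    intervalIntegral.integral_nonneg hs.1 fun σ hσ => h0 σ ⟨hσ.1, hσ.2.trans hs.2⟩
  have hF : ∀ s ∈ Icc a b, ‖F s‖ ≤ 0 := by
    intro s hs
    simpa only [gronwallBound_ε0_δ0] using norm_le_gronwallBound_of_norm_deriv_right_le
      (δ := 0) (ε := 0) hc.continuousOn_intervalPrimitive
      (fun σ hσ => hc.hasDerivWithinAt_intervalPrimitive_Ici hσ) (by simp)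
      (fun σ hσ => by
        rw [Real.norm_of_nonneg (h0 σ (Ico_subset_Icc_self hσ)),
          Real.norm_of_nonneg (hF0 σ (Ico_subset_Icc_self hσ)), add_zero]
        exact hle σ (Ico_subset_Icc_self hσ)) s hs
  intro s hs
  refine le_antisymm ?_ (h0 s hs)
  calc E s ≤ K * F s := hle s hs
    _ = 0 := by rw [norm_le_zero_iff.1 (hF s hs), mul_zero]

end Primitive

section Bistable

variable {f : ℝ → ℝ} {m M sL sU : ℝ}

lemma apply_mem_Icc_of_bistable (h₁ : AntitoneOn f (Iic m)) (h₂ : MonotoneOn f (Icc m M))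
    (h₃ : AntitoneOn f (Ici M)) (hfsL : f sL = f M) (hfsU : f sU = f m) {y : ℝ}
    (hy : y ∈ Icc sL sU) : f y ∈ Icc (f m) (f M) := by
  rcases le_total y m with hym | hmy
  · exact ⟨h₁ hym self_mem_Iic hym, hfsL ▸ h₁ (hy.1.trans hym) hym hy.1⟩
  rcases le_total y M with hyM | hMy
  · exact ⟨h₂ ⟨le_rfl, hmy.trans hyM⟩ ⟨hmy, hyM⟩ hmy, h₂ ⟨hmy, hyM⟩ ⟨hmy.trans hyM, le_rfl⟩ hyM⟩
  · exact ⟨hfsU ▸ h₃ hMy (hMy.trans hy.2) hy.2, h₃ self_mem_Ici hMy hMy⟩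

lemma apply_le_of_bistable_right (h₃ : AntitoneOn f (Ici M)) (hsU : M ≤ sU) (hfsU : f sU = f m)
    {y : ℝ} (hy : sU ≤ y) : f y ≤ f m :=
  hfsU ▸ h₃ hsU (hsU.trans hy) hy

lemma le_apply_of_bistable_left (h₁ : AntitoneOn f (Iic m)) (hsL : sL ≤ m) (hfsL : f sL = f M)
    {y : ℝ} (hy : y ≤ sL) : f M ≤ f y :=
  hfsL ▸ h₁ (hy.trans hsL) hsL hy

end Bistable

lemma LipschitzOnWith.apply_mem_Icc_excess {f : ℝ → ℝ} {L : NNReal} {K : Set ℝ}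
    {a b lo hi y : ℝ} (hf : LipschitzOnWith L f K) (hab : a ≤ b) (ha : a ∈ K) (hb : b ∈ K)
    (hfab : ∀ z ∈ Icc a b, f z ∈ Icc lo hi) (hy : y ∈ K) :
    f y ∈ Icc (lo - L * excess a b y) (hi + L * excess a b y) := by
  have hL : ∀ z ∈ K, |f y - f z| ≤ L * |y - z| := fun z hz => by
    simpa only [Real.dist_eq] using hf.dist_le_mul y hy z hz
  rcases lt_or_ge y a with hya | hay
  · obtain ⟨hlo, hhi⟩ := hfab a ⟨le_rfl, hab⟩
    rw [excess_of_ge hab hya.le]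
    have := abs_le.1 (abs_of_neg (sub_neg.2 hya) ▸ hL a ha)
    constructor <;> linarith
  rcases le_or_gt y b with hyb | hby
  · rw [excess_eq_zero_iff.2 ⟨hay, hyb⟩, mul_zero, sub_zero, add_zero]
    exact hfab y ⟨hay, hyb⟩
  · obtain ⟨hlo, hhi⟩ := hfab b ⟨hab, le_rfl⟩
    rw [excess_of_le hab hby.le]
    have := abs_le.1 (abs_of_pos (sub_pos.2 hby) ▸ hL b hb)
    constructor <;> linarith

section Integral

variable {α : Type*} [MeasurableSpace α] {μ : Measure α} {g : ℝ → ℝ} {K : Set ℝ}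

lemma integrable_comp_of_ae_mem [IsFiniteMeasure μ] (hg : Continuous g) (hK : IsCompact K)
    {v : α → ℝ} (hv : AEStronglyMeasurable v μ) (hvK : ∀ᵐ x ∂μ, v x ∈ K) :
    Integrable (fun x => g (v x)) μ := by
  obtain ⟨C, hC⟩ := hK.exists_bound_of_continuousOn hg.continuousOn
  exact .of_bound (hg.comp_aestronglyMeasurable hv) C (hvK.mono fun x hx => hC _ hx)

lemma continuousOn_integral_comp_of_ae_mem [IsFiniteMeasure μ] (hg : Continuous g)
    (hK : IsCompact K) {v : ℝ → α → ℝ} {s : Set ℝ} (hv : ∀ t, AEStronglyMeasurable (v t) μ)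
    (hvK : ∀ᵐ x ∂μ, ∀ t ∈ s, v t x ∈ K) (hvc : ∀ᵐ x ∂μ, ContinuousOn (fun t => v t x) s) :
    ContinuousOn (fun t => ∫ x, g (v t x) ∂μ) s := by
  obtain ⟨C, hC⟩ := hK.exists_bound_of_continuousOn hg.continuousOn
  refine continuousOn_of_dominated (bound := fun _ => C)
    (fun t _ => hg.comp_aestronglyMeasurable (hv t))
    (fun t ht => hvK.mono fun x hx => hC _ (hx t ht)) (integrable_const C) ?_
  filter_upwards [hvc] with x hx using hg.comp_continuousOn hx

lemma integral_mem_Icc_sub_add [IsProbabilityMeasure μ] {φ w : α → ℝ} {lo hi L : ℝ}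
    (hφ : Integrable φ μ) (hw : Integrable w μ)
    (h : ∀ᵐ x ∂μ, φ x ∈ Icc (lo - L * w x) (hi + L * w x)) :
    ∫ x, φ x ∂μ ∈ Icc (lo - L * ∫ x, w x ∂μ) (hi + L * ∫ x, w x ∂μ) := by
  have hlo : ∫ x, lo - L * w x ∂μ = lo - L * ∫ x, w x ∂μ := by
    rw [integral_sub (integrable_const _) (hw.const_mul L), integral_const_mul, integral_const,
      probReal_univ, one_smul]
  have hhi : ∫ x, hi + L * w x ∂μ = hi + L * ∫ x, w x ∂μ := by
    rw [integral_add (integrable_const _) (hw.const_mul L), integral_const_mul, integral_const,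
      probReal_univ, one_smul]
  exact ⟨hlo ▸ integral_mono_ae ((integrable_const _).sub (hw.const_mul L)) hφ
      (h.mono fun x hx => hx.1),
    hhi ▸ integral_mono_ae hφ ((integrable_const _).add (hw.const_mul L))
      (h.mono fun x hx => hx.2)⟩

end Integral

theorem ae_mem_Icc_of_hasDerivAt_sub_integral {α : Type*} [MeasurableSpace α] {ν : Measure α}
    [IsProbabilityMeasure ν] {f : ℝ → ℝ} {a b lo hi : ℝ} {K : Set ℝ} {L : NNReal}
    {u : ℝ → α → ℝ} {t₁ : ℝ} (hab : a < b) (hK : IsCompact K) (haK : a ∈ K) (hbK : b ∈ K)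
    (hfc : Continuous f) (hfL : LipschitzOnWith L f K) (hf_mem : ∀ y ∈ Icc a b, f y ∈ Icc lo hi)
    (hf_above : ∀ y, b ≤ y → f y ≤ lo) (hf_below : ∀ y, y ≤ a → hi ≤ f y)
    (hmeas : ∀ t, AEStronglyMeasurable (u t) ν) (huK : ∀ᵐ x ∂ν, ∀ t, t₁ ≤ t → u t x ∈ K)
    (hode : ∀ᵐ x ∂ν, ∀ t, t₁ ≤ t →
      HasDerivAt (fun τ => u τ x) (f (u t x) - ∫ y, f (u t y) ∂ν) t)
    (hinit : ∀ᵐ x ∂ν, u t₁ x ∈ Icc a b) {T : ℝ} (hT : t₁ ≤ T) :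
    ∀ᵐ x ∂ν, u T x ∈ Icc a b := by
  set E : ℝ → ℝ := fun t => ∫ x, excess a b (u t x) ∂ν
  have hint : ∀ g : ℝ → ℝ, Continuous g → ∀ t, t₁ ≤ t → Integrable (fun x => g (u t x)) ν :=
    fun g hg t ht => integrable_comp_of_ae_mem hg hK (hmeas t) (huK.mono fun x hx => hx t ht)
  have hE0 : ∀ t, 0 ≤ E t := fun t => integral_nonneg fun x => excess_nonneg a b _
  have hEc : ContinuousOn E (Icc t₁ T) :=
    continuousOn_integral_comp_of_ae_mem continuous_excess hK hmeas
      (huK.mono fun x hx t ht => hx t ht.1)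
      (hode.mono fun x hx t ht => (hx t ht.1).continuousAt.continuousWithinAt)
  have hmean : ∀ t, t₁ ≤ t → ∫ y, f (u t y) ∂ν ∈ Icc (lo - L * E t) (hi + L * E t) :=
    fun t ht => integral_mem_Icc_sub_add (hint f hfc t ht) (hint _ continuous_excess t ht)
      (huK.mono fun x hx => hfL.apply_mem_Icc_excess hab.le haK hbK hf_mem (hx t ht))
  have hcomp : ∀ᵐ x ∂ν, ∀ t ∈ Icc t₁ T, excess a b (u t x) ≤ L * ∫ σ in t₁..t, E σ := by
    filter_upwards [hode, hinit] with x hx hx₁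
    refine excess_comp_le_of_hasDerivAt (e := fun t => L * E t) hab (fun t ht => hx t ht.1)
      ?_ ?_ (fun t _ => mul_nonneg L.coe_nonneg (hE0 t))
      (fun t ht => (hEc.hasDerivWithinAt_intervalPrimitive_Ici ht).const_mul _)
      (continuousOn_const.mul hEc.continuousOn_intervalPrimitive)
      (by simp [excess_eq_zero_iff.2 hx₁])
    · intro t ht hbt
      linarith [(hmean t ht.1).1, hf_above _ hbt]
    · intro t ht hta
      linarith [(hmean t ht.1).2, hf_below _ hta]
  have hEle : ∀ t ∈ Icc t₁ T, E t ≤ L * ∫ σ in t₁..t, E σ := fun t ht => by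
    simpa using integral_mono_ae (hint _ continuous_excess t ht.1) (integrable_const _)
      (hcomp.mono fun x hx => hx t ht)
  have hET : E T = 0 := eq_zero_of_le_mul_integral hEc (fun t _ => hE0 t) hEle T ⟨hT, le_rfl⟩
  filter_upwards [(integral_eq_zero_iff_of_nonneg (fun x => excess_nonneg a b _)
    (hint _ continuous_excess T hT)).1 hET] with x hx
  exact excess_eq_zero_iff.1 hx

/-- For a bistable nonlinearity with `f(s_*) = f(M)`, `f(s^*) = f(m)`, the
interval `[s_*, s^*]` is invariant for `u_t = f(u) - ⟨f(u)⟩`: if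
`s_* ≤ u(·,t₁) ≤ s^*` a.e. then `s_* ≤ u(·,t) ≤ s^*` a.e. for all `t ≥ t₁`. -/
theorem stmt4 {N : ℕ} (Ω : Set (Fin N → ℝ)) (hΩo : IsOpen Ω)
    (hΩb : Bornology.IsBounded Ω) (hΩpos : 0 < volume Ω)
    (f : ℝ → ℝ) (hf : ContDiff ℝ 1 f)
    (m M : ℝ) (hmM : m < M)
    (hf1 : ∀ s, s < m → deriv f s < 0) (hf2 : ∀ s, M < s → deriv f s < 0)
    (hf3 : ∀ s ∈ Ioo m M, 0 < deriv f s)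
    (sL sU : ℝ) (hsL : sL < m) (hsU : M < sU)
    (hfsL : f sL = f M) (hfsU : f sU = f m)
    (u : ℝ → (Fin N → ℝ) → ℝ)
    (hmeas : Measurable (Function.uncurry u))
    (C : ℝ) (hbd : ∀ t, 0 ≤ t → ∀ x ∈ Ω, |u t x| ≤ C)
    (hode : ∀ x ∈ Ω, ∀ t, 0 ≤ t →
      HasDerivAt (fun τ => u τ x) (f (u t x) - ⨍ y in Ω, f (u t y)) t)
    (t₁ : ℝ) (ht₁ : 0 ≤ t₁)
    (hinit : ∀ᵐ x ∂(volume.restrict Ω), sL ≤ u t₁ x ∧ u t₁ x ≤ sU) :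
    ∀ t, t₁ ≤ t →
      ∀ᵐ x ∂(volume.restrict Ω), sL ≤ u t x ∧ u t x ≤ sU := by
  intro T hT
  set μ := volume.restrict Ω
  have : IsFiniteMeasure μ := isFiniteMeasure_restrict.2 hΩb.measure_lt_top.ne
  have : NeZero μ := ⟨by simpa [μ, Measure.restrict_eq_zero] using hΩpos.ne'⟩
  have hae : ∀ {p : (Fin N → ℝ) → Prop}, (∀ x ∈ Ω, p x) → ∀ᵐ x ∂(μ univ)⁻¹ • μ, p x :=
    fun h => Measure.ae_smul_measure (ae_restrict_of_forall_mem hΩo.measurableSet h) _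
  have h₁ : AntitoneOn f (Iic m) := (strictAntiOn_of_deriv_neg (convex_Iic m)
    hf.continuous.continuousOn (by simpa using hf1)).antitoneOn
  have h₂ : MonotoneOn f (Icc m M) := (strictMonoOn_of_deriv_pos (convex_Icc m M)
    hf.continuous.continuousOn (by simpa using hf3)).monotoneOn
  have h₃ : AntitoneOn f (Ici M) := (strictAntiOn_of_deriv_neg (convex_Ici M)
    hf.continuous.continuousOn (by simpa using hf2)).antitoneOn
  set K := Icc (min sL (-C)) (max sU C)
  have hsLK : sL ∈ K := ⟨min_le_left _ _, by linarith [le_max_left sU C]⟩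
  have hsUK : sU ∈ K := ⟨by linarith [min_le_left sL (-C)], le_max_left _ _⟩
  obtain ⟨L, hL⟩ := hf.locallyLipschitz.locallyLipschitzOn.exists_lipschitzOnWith_of_compact
    (isCompact_Icc : IsCompact K)
  -- `⨍ y in Ω, _` is by definition the integral against the probability measure `(μ univ)⁻¹ • μ`.
  refine (Measure.absolutelyContinuous_smul (ENNReal.inv_ne_zero.2 (measure_ne_top μ univ))).ae_le
    (ae_mem_Icc_of_hasDerivAt_sub_integral (hsL.trans (hmM.trans hsU)) isCompact_Icc hsLK hsUK
      hf.continuous hL (fun y hy => apply_mem_Icc_of_bistable h₁ h₂ h₃ hfsL hfsU hy)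
      (fun y hy => apply_le_of_bistable_right h₃ hsU.le hfsU hy)
      (fun y hy => le_apply_of_bistable_left h₁ hsL.le hfsL hy)
      (fun t => (hmeas.comp measurable_prodMk_left).aestronglyMeasurable)
      (hae fun x hx t ht => ?_) (hae fun x hx t ht => hode x hx t (ht₁.trans ht))
      (Measure.ae_smul_measure hinit _) hT)
  have := abs_le.1 (hbd t (ht₁.trans ht) x hx)
  exact ⟨min_le_of_right_le this.1, le_max_of_le_right this.2⟩
end

section
/- Let f ∈ C^1(ℝ) be bistable (f' < 0 on (-∞,m)∪(M,∞), f' > 0 on (m,M)) with s_* < m < M < s^*, f(s_*) = f(M), f(s^*) = f(m). Let u solve u_t = f(u) - ⟨f(u)⟩ with s_* ≤ u(·,0) ≤ s^* a.e., and set λ(t) = ⟨f(u(t))⟩. Then f(m) ≤ λ(t) ≤ f(M) for all t ≥ 0, and consequently for each x (with Y(t) = Y(t;u_0(x)) the characteristic ODE solution): if Y(t_0) ≤ m then Y(t) ≤ m for all t ≥ t_0, and if Y(t_0) ≥ M then Y(t) ≥ M for all t ≥ t_0. -/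
/-!
Write `λ(t) = ⟨f(u(t))⟩` and `K` for a Lipschitz constant of `f` on the range of `u`. Since
`f` maps `[s_*, s^*]` into `[f m, f M] = [f s^*, f s_*]`, the points `s_*` and `s^*` are barriers
for every characteristic `Y' = f(Y) - λ(t)` as long as `λ` stays in `[f m, f M]`, and then so
does `λ(t)`, being an average of values of `f` on `[s_*, s^*]`. To break the circularity, suppose
that `λ` stays in `[f m, f M]` up to time `a` and leaves it by at most `S` on `(a, a + h]`, where
`4 K h ≤ 1`. The moving barriers `s_* - 2 S (t - a)` and `s^* + 2 S (t - a)` keep `u(t)` so close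
to `[s_*, s^*]` that `λ(t)` leaves `[f m, f M]` by at most `S / 2`; hence `S = 0`, and induction
over windows of length `h` covers all `t ≥ 0`. The second claim is the same barrier argument
with the constant barriers `m` and `M`.
-/

open Set Filter Topology MeasureTheory
open scoped NNReal

theorem nonpos_of_hasDerivAt_le_mul_of_pos {D D' : ℝ → ℝ} {K a b : ℝ}
    (hD : ∀ x ∈ Icc a b, HasDerivAt D (D' x) x)
    (hbound : ∀ x ∈ Ioo a b, 0 < D x → D' x ≤ K * D x) (ha : D a ≤ 0) :
    ∀ x ∈ Icc a b, D x ≤ 0 := by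
  intro x hx
  refine le_of_forall_pos_le_add fun ε hε => ?_
  -- compare `D` with `ε e^{L (r - x)}`, which grows strictly faster than `D` can
  set L := |K| + 1
  have hB : ∀ r, HasDerivAt (fun r => ε * Real.exp (L * (r - x)))
      (ε * Real.exp (L * (r - x)) * L) r := fun r => by
    simpa [mul_assoc] using
      (((hasDerivAt_id r).sub_const x).const_mul L).exp.const_mul ε
  have hle := image_le_of_deriv_right_lt_deriv_boundary
    (fun r hr => (hD r hr).continuousAt.continuousWithinAt)
    (fun r hr => (hD r (Ico_subset_Icc_self hr)).hasDerivWithinAt)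
    (ha.trans (by positivity)) hB ?_ hx
  · simpa using hle
  intro r hr hDr
  have hpos : 0 < ε * Real.exp (L * (r - x)) := by positivity
  rcases hr.1.eq_or_lt with rfl | har
  · linarith
  calc D' r ≤ K * D r := hbound r ⟨har, hr.2⟩ (hDr ▸ hpos)
    _ ≤ |K| * D r := mul_le_mul_of_nonneg_right (le_abs_self K) (hDr ▸ hpos).le
    _ < ε * Real.exp (L * (r - x)) * L := by rw [hDr]; nlinarith

section Barrier

variable {f lam y : ℝ → ℝ} {K : ℝ≥0} {a t c S β : ℝ}

theorem le_add_mul_of_hasDerivAt_sub (hy : ∀ r ∈ Icc a t, HasDerivAt y (f (y r) - lam r) r)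
    (hlip : ∀ r ∈ Ioo a t, dist (f (y r)) (f c) ≤ K * dist (y r) c)
    (hlam : ∀ r ∈ Ioo a t, f c - S ≤ lam r) (hβ : 0 ≤ β) (hSβ : S + K * β * (t - a) ≤ β)
    (h0 : y a ≤ c) : ∀ r ∈ Icc a t, y r ≤ c + β * (r - a) := by
  have hD : ∀ r ∈ Icc a t, HasDerivAt (fun r => y r - (c + β * (r - a)))
      (f (y r) - lam r - β) r := fun r hr =>
    ((hy r hr).sub (HasDerivAt.const_add c
      (((hasDerivAt_id r).sub_const a).const_mul β))).congr_deriv (by ring)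
  have hcmp := nonpos_of_hasDerivAt_le_mul_of_pos hD (K := K) ?_ (by simpa using h0)
  · exact fun r hr => sub_nonpos.1 (hcmp r hr)
  intro r hr hpos
  have hyc : c < y r := by nlinarith [hr.1]
  have hfy : f (y r) - f c ≤ K * (y r - c) := by
    have := hlip r hr
    rw [Real.dist_eq, Real.dist_eq, abs_of_pos (sub_pos.2 hyc)] at this
    exact (le_abs_self _).trans this
  have hKβ : K * β * (r - a) ≤ K * β * (t - a) :=
    mul_le_mul_of_nonneg_left (by linarith [hr.2]) (mul_nonneg K.2 hβ)
  nlinarith [hlam r hr]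

theorem sub_mul_le_of_hasDerivAt_sub (hy : ∀ r ∈ Icc a t, HasDerivAt y (f (y r) - lam r) r)
    (hlip : ∀ r ∈ Ioo a t, dist (f (y r)) (f c) ≤ K * dist (y r) c)
    (hlam : ∀ r ∈ Ioo a t, lam r ≤ f c + S) (hβ : 0 ≤ β) (hSβ : S + K * β * (t - a) ≤ β)
    (h0 : c ≤ y a) : ∀ r ∈ Icc a t, c - β * (r - a) ≤ y r := by
  have hneg := le_add_mul_of_hasDerivAt_sub (f := fun z => -f (-z)) (lam := -lam) (y := -y)
    (c := -c) (fun r hr => (hy r hr).neg.congr_deriv (by simp only [Pi.neg_apply, neg_neg]; ring))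
    (fun r hr => by simpa [dist_neg_neg] using hlip r hr)
    (fun r hr => by simpa [sub_eq_add_neg, add_comm] using hlam r hr) hβ hSβ (by simpa using h0)
  intro r hr
  have := hneg r hr
  simp only [Pi.neg_apply] at this
  linarith

theorem mem_Icc_sub_add_of_hasDerivAt_sub {s : Set ℝ} {p q : ℝ} (hf : LipschitzOnWith K f s)
    (hp : p ∈ s) (hq : q ∈ s) (hys : ∀ r ∈ Ioo a t, y r ∈ s)
    (hy : ∀ r ∈ Icc a t, HasDerivAt y (f (y r) - lam r) r)
    (hlam : ∀ r ∈ Ioo a t, lam r ∈ Icc (f q - S) (f p + S)) (hβ : 0 ≤ β)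
    (hSβ : S + K * β * (t - a) ≤ β) (h0 : y a ∈ Icc p q) (hat : a ≤ t) :
    y t ∈ Icc (p - β * (t - a)) (q + β * (t - a)) :=
  ⟨sub_mul_le_of_hasDerivAt_sub hy (fun r hr => hf.dist_le_mul _ (hys r hr) _ hp)
      (fun r hr => (hlam r hr).2) hβ hSβ h0.1 t ⟨hat, le_rfl⟩,
    le_add_mul_of_hasDerivAt_sub hy (fun r hr => hf.dist_le_mul _ (hys r hr) _ hq)
      (fun r hr => (hlam r hr).1) hβ hSβ h0.2 t ⟨hat, le_rfl⟩⟩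

end Barrier

theorem exists_dist_le_mul_of_continuousOn {f y : ℝ → ℝ} (hf : LocallyLipschitz f) {a t : ℝ}
    (c : ℝ) (hy : ContinuousOn y (Icc a t)) :
    ∃ K : ℝ≥0, ∀ r ∈ Icc a t, dist (f (y r)) (f c) ≤ K * dist (y r) c := by
  obtain ⟨K, hK⟩ := hf.locallyLipschitzOn.exists_lipschitzOnWith_of_compact
    ((isCompact_Icc.image_of_continuousOn hy).insert c)
  exact ⟨K, fun r hr => hK.dist_le_mul _ (mem_insert_of_mem _ (mem_image_of_mem y hr)) _
    (mem_insert c _)⟩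

section Invariance

variable {f lam y : ℝ → ℝ} {a t c : ℝ}

theorem le_of_hasDerivAt_sub_of_le (hf : LocallyLipschitz f) (hat : a ≤ t)
    (hy : ∀ r ∈ Icc a t, HasDerivAt y (f (y r) - lam r) r)
    (hlam : ∀ r ∈ Ioo a t, f c ≤ lam r) (h0 : y a ≤ c) : y t ≤ c := by
  obtain ⟨K, hK⟩ := exists_dist_le_mul_of_continuousOn hf c
    fun r hr => (hy r hr).continuousAt.continuousWithinAt
  simpa using le_add_mul_of_hasDerivAt_sub (K := K) (S := 0) (β := 0) hy
    (fun r hr => hK r (Ioo_subset_Icc_self hr)) (by simpa using hlam) le_rfl (by simp) h0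
    t ⟨hat, le_rfl⟩

theorem le_of_hasDerivAt_sub_of_ge (hf : LocallyLipschitz f) (hat : a ≤ t)
    (hy : ∀ r ∈ Icc a t, HasDerivAt y (f (y r) - lam r) r)
    (hlam : ∀ r ∈ Ioo a t, lam r ≤ f c) (h0 : c ≤ y a) : c ≤ y t := by
  obtain ⟨K, hK⟩ := exists_dist_le_mul_of_continuousOn hf c
    fun r hr => (hy r hr).continuousAt.continuousWithinAt
  simpa using sub_mul_le_of_hasDerivAt_sub (K := K) (S := 0) (β := 0) hy
    (fun r hr => hK r (Ioo_subset_Icc_self hr)) (by simpa using hlam) le_rfl (by simp) h0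
    t ⟨hat, le_rfl⟩

end Invariance

theorem LipschitzOnWith.mem_Icc_sub_add_of_mem_Icc_sub_add {f : ℝ → ℝ} {K : ℝ≥0} {s : Set ℝ}
    (hf : LipschitzOnWith K f s) {p q A B δ y : ℝ} (hpq : p ≤ q) (hps : Icc p q ⊆ s)
    (hmaps : MapsTo f (Icc p q) (Icc A B)) (hδ : 0 ≤ δ) (hys : y ∈ s)
    (hy : y ∈ Icc (p - δ) (q + δ)) : f y ∈ Icc (A - K * δ) (B + K * δ) := by
  set z := max p (min q y)
  have hz : z ∈ Icc p q := ⟨le_max_left _ _, max_le hpq (min_le_left _ _)⟩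
  have hyz : dist y z ≤ δ := by
    have hzy : min q y ≤ z ∧ z ≤ max p y := ⟨le_max_right _ _, max_le_max le_rfl (min_le_right _ _)⟩
    have hmin : y - δ ≤ min q y := le_min (by linarith [hy.2]) (by linarith)
    have hmax : max p y ≤ y + δ := max_le (by linarith [hy.1]) (by linarith)
    rw [Real.dist_eq, abs_le]
    constructor <;> linarith [hzy.1, hzy.2]
  have hfz := hmaps hz
  have hfyz := (hf.dist_le_mul y hys z (hps hz)).trans
    (mul_le_mul_of_nonneg_left hyz K.2)
  rw [Real.dist_eq, abs_le] at hfyz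
  constructor <;> linarith [hfz.1, hfz.2, hfyz.1, hfyz.2]

theorem max_sub_sub_le_iff {A B x S : ℝ} :
    max (A - x) (x - B) ≤ S ↔ x ∈ Icc (A - S) (B + S) := by
  simp only [max_le_iff, mem_Icc]
  constructor <;> rintro ⟨h1, h2⟩ <;> constructor <;> linarith

theorem nonpos_of_window_contraction {d : ℝ → ℝ} {h : ℝ} (hh : 0 < h)
    (hbdd : BddAbove (d '' Ici 0)) (h0 : d 0 ≤ 0)
    (hstep : ∀ a ≥ 0, (∀ r ∈ Icc 0 a, d r ≤ 0) → ∀ S ≥ 0,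
      (∀ r ∈ Ioc a (a + h), d r ≤ S) → ∀ r ∈ Ioc a (a + h), d r ≤ S / 2) :
    ∀ t ≥ 0, d t ≤ 0 := by
  have hwin : ∀ n : ℕ, ∀ r ∈ Icc 0 (n * h), d r ≤ 0 := by
    intro n
    induction n with
    | zero =>
      intro r hr
      obtain rfl : r = 0 := le_antisymm (by simpa using hr.2) hr.1
      exact h0
    | succ n ih =>
      intro r hr
      have ha : (0 : ℝ) ≤ n * h := by positivity
      rcases le_or_gt r (n * h) with hra | hra
      · exact ih r ⟨hr.1, hra⟩
      have hbdd' : BddAbove (d '' Ioc (n * h) (n * h + h)) :=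
        hbdd.mono (image_mono fun r hr => le_of_lt (ha.trans_lt hr.1))
      set S := max (sSup (d '' Ioc (n * h) (n * h + h))) 0
      have hS0 : 0 ≤ S := le_max_right _ _
      have hS := hstep _ ha ih S hS0
        fun r hr => (le_csSup hbdd' (mem_image_of_mem d hr)).trans (le_max_left _ _)
      have hSS : S ≤ S / 2 := max_le (csSup_le (Nonempty.image _ (nonempty_Ioc.2 (by linarith)))
        (by rintro _ ⟨r, hr, rfl⟩; exact hS r hr)) (by linarith)
      have := hS r ⟨hra, by push_cast at hr; linarith [hr.2]⟩
      linarith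
  intro t ht
  obtain ⟨n, hn⟩ := exists_nat_ge (t / h)
  exact hwin n t ⟨ht, by rwa [div_le_iff₀ hh] at hn⟩

theorem mem_Icc_of_hasDerivAt_sub_window {f lam y : ℝ → ℝ} {K : ℝ≥0} {s : Set ℝ}
    {p q a t S : ℝ} (hf : LipschitzOnWith K f s) (hpq : p ≤ q) (hps : Icc p q ⊆ s)
    (hmaps : MapsTo f (Icc p q) (Icc (f q) (f p)))
    (hys : ∀ r ≥ 0, y r ∈ s) (hy : ∀ r ≥ 0, HasDerivAt y (f (y r) - lam r) r)
    (h0 : y 0 ∈ Icc p q) (ha : 0 ≤ a) (hlam₀ : ∀ r ∈ Icc 0 a, lam r ∈ Icc (f q) (f p))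
    (hS : 0 ≤ S) (hlamS : ∀ r ∈ Ioc a t, lam r ∈ Icc (f q - S) (f p + S))
    (hat : a ≤ t) (hKt : 4 * K * (t - a) ≤ 1) :
    f (y t) ∈ Icc (f q - S / 2) (f p + S / 2) := by
  have hp : p ∈ s := hps ⟨le_rfl, hpq⟩
  have hq : q ∈ s := hps ⟨hpq, le_rfl⟩
  have hya : y a ∈ Icc p q := by
    simpa using mem_Icc_sub_add_of_hasDerivAt_sub (S := 0) (β := 0) hf hp hq
      (fun r hr => hys r hr.1.le) (fun r hr => hy r hr.1)
      (fun r hr => by simpa using hlam₀ r (Ioo_subset_Icc_self hr)) le_rfl (by simp) h0 ha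
  have hyt := mem_Icc_sub_add_of_hasDerivAt_sub (β := 2 * S) hf hp hq
    (fun r hr => hys r (ha.trans hr.1.le)) (fun r hr => hy r (ha.trans hr.1))
    (fun r hr => hlamS r (Ioo_subset_Ioc_self hr)) (by positivity) (by nlinarith) hya hat
  have hfyt := hf.mem_Icc_sub_add_of_mem_Icc_sub_add hpq hps hmaps
    (by nlinarith : 0 ≤ 2 * S * (t - a)) (hys t (ha.trans hat)) hyt
  have hKS : K * (2 * S * (t - a)) ≤ S / 2 := by nlinarith
  exact ⟨by linarith [hfyt.1], by linarith [hfyt.2]⟩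

theorem average_mem_Icc_of_hasDerivAt {X : Type*} [MeasurableSpace X] {μ : Measure X}
    [IsFiniteMeasure μ] [NeZero μ] {f : ℝ → ℝ} (hf : LocallyLipschitz f) {p q : ℝ}
    (hpq : p ≤ q) (hmaps : MapsTo f (Icc p q) (Icc (f q) (f p))) {u : ℝ → X → ℝ}
    (hmeas : ∀ t, Measurable (u t)) {C : ℝ} (hbd : ∀ᵐ x ∂μ, ∀ t ≥ 0, |u t x| ≤ C)
    (hode : ∀ᵐ x ∂μ, ∀ t ≥ 0,
      HasDerivAt (fun τ => u τ x) (f (u t x) - ⨍ y, f (u t y) ∂μ) t)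
    (hinit : ∀ᵐ x ∂μ, u 0 x ∈ Icc p q) :
    ∀ t ≥ 0, ⨍ y, f (u t y) ∂μ ∈ Icc (f q) (f p) := by
  set s := Icc (min (-C) p) (max C q)
  have hps : Icc p q ⊆ s := Icc_subset_Icc (min_le_right _ _) (le_max_right _ _)
  have hus : ∀ᵐ x ∂μ, ∀ t ≥ 0, u t x ∈ s := hbd.mono fun x hx t ht =>
    ⟨(min_le_left _ _).trans (abs_le.1 (hx t ht)).1, (abs_le.1 (hx t ht)).2.trans (le_max_left _ _)⟩
  have hs : IsCompact s := isCompact_Icc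
  obtain ⟨K, hK⟩ := hf.locallyLipschitzOn.exists_lipschitzOnWith_of_compact hs
  obtain ⟨F, hF⟩ := hs.exists_bound_of_continuousOn hf.continuous.continuousOn
  set lam := fun t => ⨍ y, f (u t y) ∂μ
  have havg : ∀ t ≥ 0, ∀ A B, (∀ᵐ x ∂μ, f (u t x) ∈ Icc A B) → lam t ∈ Icc A B :=
    fun t ht A B h => (convex_Icc A B).average_mem isClosed_Icc h <|
      .of_bound (hf.continuous.measurable.comp (hmeas t)).aestronglyMeasurable F
        (hus.mono fun x hx => hF _ (hx t ht))
  have hlamF : ∀ t ≥ 0, lam t ∈ Icc (-F) F := fun t ht =>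
    havg t ht _ _ (hus.mono fun x hx => abs_le.1 (hF _ (hx t ht)))
  set d := fun t => max (f q - lam t) (lam t - f p)
  have hdneg := nonpos_of_window_contraction (d := d) (h := 1 / (4 * K + 1)) (by positivity)
    ⟨max (f q + F) (F - f p), ?_⟩ ?_ ?_
  · intro t ht
    simpa using max_sub_sub_le_iff.1 (hdneg t ht)
  · rintro _ ⟨t, ht, rfl⟩
    have := hlamF t ht
    exact max_le_max (by linarith [this.1]) (by linarith [this.2])
  · exact max_sub_sub_le_iff.2 (by simpa using havg 0 le_rfl _ _ (hinit.mono fun x hx => hmaps hx))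
  · intro a ha hIH S hS hwin t ht
    rw [max_sub_sub_le_iff]
    refine havg t (ha.trans ht.1.le) _ _ ?_
    filter_upwards [hus, hode, hinit] with x hxs hx hx0
    have hKt : (4 * K + 1) * (t - a) ≤ 1 := by
      rw [← le_div_iff₀' (by positivity)]
      linarith [ht.2]
    exact mem_Icc_of_hasDerivAt_sub_window hK hpq hps hmaps hxs hx hx0 ha
      (fun r hr => by simpa using max_sub_sub_le_iff.1 (hIH r hr)) hS
      (fun r hr => max_sub_sub_le_iff.1 (hwin r ⟨hr.1, hr.2.trans ht.2⟩)) ht.1.le (by nlinarith [ht.1])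

theorem mapsTo_Icc_of_deriv_sign {f : ℝ → ℝ} (hf : Continuous f) {m M p q : ℝ}
    (hf1 : ∀ s, s < m → deriv f s < 0) (hf2 : ∀ s, M < s → deriv f s < 0)
    (hf3 : ∀ s ∈ Ioo m M, 0 < deriv f s) (hp : f p = f M) (hq : f q = f m) :
    MapsTo f (Icc p q) (Icc (f q) (f p)) := by
  have hanti₁ : AntitoneOn f (Iic m) := (strictAntiOn_of_deriv_neg (convex_Iic m)
    hf.continuousOn fun x hx => hf1 x (by rwa [interior_Iic] at hx)).antitoneOn
  have hmono : MonotoneOn f (Icc m M) := (strictMonoOn_of_deriv_pos (convex_Icc m M)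
    hf.continuousOn fun x hx => hf3 x (by rwa [interior_Icc] at hx)).monotoneOn
  have hanti₂ : AntitoneOn f (Ici M) := (strictAntiOn_of_deriv_neg (convex_Ici M)
    hf.continuousOn fun x hx => hf2 x (by rwa [interior_Ici] at hx)).antitoneOn
  rintro y ⟨hpy, hyq⟩
  rw [hp, hq]
  rcases le_or_gt y m with hym | hmy
  · exact ⟨hanti₁ hym (mem_Iic.2 le_rfl) hym, hp ▸ hanti₁ (hpy.trans hym) hym hpy⟩
  rcases le_or_gt y M with hyM | hMy
  · exact ⟨hmono ⟨le_rfl, hmy.le.trans hyM⟩ ⟨hmy.le, hyM⟩ hmy.le,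
      hmono ⟨hmy.le, hyM⟩ ⟨hmy.le.trans hyM, le_rfl⟩ hyM⟩
  · exact ⟨hq ▸ hanti₂ hMy.le (hMy.le.trans hyq) hyq, hanti₂ (mem_Ici.2 le_rfl) hMy.le hMy.le⟩

/-- For a bistable `f` and a solution with `s_* ≤ u₀ ≤ s^*` a.e., the nonlocal
term `λ(t) = ⟨f(u(t))⟩` satisfies `f(m) ≤ λ(t) ≤ f(M)`; consequently, for any
characteristic `Y' = f(Y) - λ(t)`, the regions `{Y ≤ m}` and `{Y ≥ M}` are
forward invariant. -/
theorem stmt15 {N : ℕ} (Ω : Set (Fin N → ℝ)) (hΩo : IsOpen Ω)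
    (hΩb : Bornology.IsBounded Ω) (hΩpos : 0 < volume Ω)
    (f : ℝ → ℝ) (hf : ContDiff ℝ 1 f)
    (m M : ℝ) (hmM : m < M)
    (hf1 : ∀ s, s < m → deriv f s < 0) (hf2 : ∀ s, M < s → deriv f s < 0)
    (hf3 : ∀ s ∈ Ioo m M, 0 < deriv f s)
    (sL sU : ℝ) (hsL : sL < m) (hsU : M < sU)
    (hfsL : f sL = f M) (hfsU : f sU = f m)
    (u : ℝ → (Fin N → ℝ) → ℝ)
    (hmeas : Measurable (Function.uncurry u))
    (C : ℝ) (hbd : ∀ t : ℝ, 0 ≤ t → ∀ x ∈ Ω, |u t x| ≤ C)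
    (hode : ∀ x ∈ Ω, ∀ t : ℝ, 0 ≤ t →
      HasDerivAt (fun τ => u τ x) (f (u t x) - ⨍ y in Ω, f (u t y)) t)
    (hinit : ∀ᵐ x ∂(volume.restrict Ω), sL ≤ u 0 x ∧ u 0 x ≤ sU) :
    (∀ t : ℝ, 0 ≤ t →
      f m ≤ (⨍ y in Ω, f (u t y)) ∧ (⨍ y in Ω, f (u t y)) ≤ f M) ∧
    (∀ Y : ℝ → ℝ,
      (∀ t : ℝ, 0 ≤ t →
        HasDerivAt Y (f (Y t) - ⨍ y in Ω, f (u t y)) t) →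
      ∀ t₀ : ℝ, 0 ≤ t₀ →
        ((Y t₀ ≤ m → ∀ t, t₀ ≤ t → Y t ≤ m) ∧
         (M ≤ Y t₀ → ∀ t, t₀ ≤ t → M ≤ Y t))) := by
  have hΩ := hΩo.measurableSet
  have : IsFiniteMeasure (volume.restrict Ω) :=
    isFiniteMeasure_restrict.2 hΩb.measure_lt_top.ne
  have : NeZero (volume.restrict Ω) := ⟨Measure.restrict_eq_zero.not.2 hΩpos.ne'⟩
  have hlam : ∀ t : ℝ, 0 ≤ t →
      f m ≤ (⨍ y in Ω, f (u t y)) ∧ (⨍ y in Ω, f (u t y)) ≤ f M := by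
    intro t ht
    have := average_mem_Icc_of_hasDerivAt hf.locallyLipschitz (by linarith)
      (mapsTo_Icc_of_deriv_sign hf.continuous hf1 hf2 hf3 hfsL hfsU)
      (fun t => hmeas.comp measurable_prodMk_left)
      ((ae_restrict_mem hΩ).mono fun x hx t ht => hbd t ht x hx)
      ((ae_restrict_mem hΩ).mono hode) hinit t ht
    rwa [hfsU, hfsL] at this
  refine ⟨hlam, fun Y hY t₀ ht₀ => ⟨fun hYm t ht => ?_, fun hMY t ht => ?_⟩⟩
  · exact le_of_hasDerivAt_sub_of_le hf.locallyLipschitz ht (fun r hr => hY r (ht₀.trans hr.1))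
      (fun r hr => (hlam r (ht₀.trans hr.1.le)).1) hYm
  · exact le_of_hasDerivAt_sub_of_ge hf.locallyLipschitz ht (fun r hr => hY r (ht₀.trans hr.1))
      (fun r hr => (hlam r (ht₀.trans hr.1.le)).2) hMY
end

section
/- Let f be bistable as in the standard assumptions with s_* < m < M < s^*, f(s_*) = f(M), f(s^*) = f(m), f strictly decreasing on (-∞,m] and on [M,∞). Suppose φ = a_- χ_{A_-} + a_+ χ_{A_+} and φ̄ = ā_- χ_{A_-} + ā_+ χ_{A_+} with a_-, ā_- ∈ [s_*, m], a_+, ā_+ ∈ [M, s^*], f(a_-) = f(a_+), f(ā_-) = f(ā_+), where A_-, A_+ partition Ω with |A_-|, |A_+| > 0. If ∫_Ω φ = ∫_Ω φ̄, then (a_-, a_+) = (ā_-, ā_+), i.e. φ = φ̄ a.e. -/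
open Set Filter Topology MeasureTheory

/-! Through `f(a₋) = f(a₊)`, strict antitonicity of `f` on both branches makes `a₊` a strictly
increasing function of `a₋`. So `a₋ < ā₋` forces `a₊ < ā₊` and a strictly larger mass, since
`|A₋| > 0`; hence `a₋ = ā₋`, and injectivity of `f` on `[M, ∞)` gives `a₊ = ā₊`. -/

theorem StrictAntiOn.lt_of_apply_eq_apply {α β : Type*} [LinearOrder α] [Preorder β]
    {f : α → β} {s t : Set α} (hs : StrictAntiOn f s) (ht : StrictAntiOn f t)
    {x y x' y' : α} (hx : x ∈ s) (hy : y ∈ s) (hx' : x' ∈ t) (hy' : y' ∈ t)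
    (hfx : f x = f x') (hfy : f y = f y') (hxy : x < y) : x' < y' := by
  rw [← ht.lt_iff_gt hy' hx', ← hfx, ← hfy]
  exact hs hx hy hxy

theorem stmt17_general {N : ℕ} (Ω : Set (Fin N → ℝ))
    (hΩb : Bornology.IsBounded Ω)
    (f : ℝ → ℝ) (m M sL sU : ℝ)
    (hanti₁ : StrictAntiOn f (Iic m)) (hanti₂ : StrictAntiOn f (Ici M))
    (ANeg APos : Set (Fin N → ℝ))
    (hunion : ANeg ∪ APos = Ω)
    (hANegpos : 0 < volume ANeg)
    (aNeg aPos bNeg bPos : ℝ)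
    (haNeg : aNeg ∈ Icc sL m) (haPos : aPos ∈ Icc M sU)
    (hbNeg : bNeg ∈ Icc sL m) (hbPos : bPos ∈ Icc M sU)
    (hfa : f aNeg = f aPos) (hfb : f bNeg = f bPos)
    (hmass : (volume ANeg).toReal * aNeg + (volume APos).toReal * aPos
      = (volume ANeg).toReal * bNeg + (volume APos).toReal * bPos) :
    aNeg = bNeg ∧ aPos = bPos := by
  have hα : 0 < (volume ANeg).toReal := ENNReal.toReal_pos hANegpos.ne'
    (hΩb.subset (hunion ▸ subset_union_left)).measure_lt_top.ne
  have hβ : 0 ≤ (volume APos).toReal := ENNReal.toReal_nonneg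
  have hNeg : aNeg = bNeg := by
    rcases lt_trichotomy aNeg bNeg with h | h | h
    · have hPos :=
        hanti₁.lt_of_apply_eq_apply hanti₂ haNeg.2 hbNeg.2 haPos.1 hbPos.1 hfa hfb h
      linarith [mul_lt_mul_of_pos_left h hα, mul_le_mul_of_nonneg_left hPos.le hβ]
    · exact h
    · have hPos :=
        hanti₁.lt_of_apply_eq_apply hanti₂ hbNeg.2 haNeg.2 hbPos.1 haPos.1 hfb hfa h
      linarith [mul_lt_mul_of_pos_left h hα, mul_le_mul_of_nonneg_left hPos.le hβ]
  refine ⟨hNeg, hanti₂.injOn haPos.1 hbPos.1 ?_⟩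
  rw [← hfa, ← hfb, hNeg]

/-- Uniqueness of two-valued stationary profiles: two step functions with
values determined by `f(a₋) = f(a₊)` on the same partition and with the same
mass must coincide. -/
theorem stmt17 {N : ℕ} (Ω : Set (Fin N → ℝ)) (hΩm : MeasurableSet Ω)
    (hΩb : Bornology.IsBounded Ω)
    (f : ℝ → ℝ) (m M sL sU : ℝ)
    (hsLm : sL < m) (hmM : m < M) (hMsU : M < sU)
    (hfsL : f sL = f M) (hfsU : f sU = f m)
    (hanti₁ : StrictAntiOn f (Iic m)) (hanti₂ : StrictAntiOn f (Ici M))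
    (ANeg APos : Set (Fin N → ℝ))
    (hANeg : MeasurableSet ANeg) (hAPos : MeasurableSet APos)
    (hdisj : Disjoint ANeg APos) (hunion : ANeg ∪ APos = Ω)
    (hANegpos : 0 < volume ANeg) (hAPospos : 0 < volume APos)
    (aNeg aPos bNeg bPos : ℝ)
    (haNeg : aNeg ∈ Icc sL m) (haPos : aPos ∈ Icc M sU)
    (hbNeg : bNeg ∈ Icc sL m) (hbPos : bPos ∈ Icc M sU)
    (hfa : f aNeg = f aPos) (hfb : f bNeg = f bPos)
    (hmass : (volume ANeg).toReal * aNeg + (volume APos).toReal * aPos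
      = (volume ANeg).toReal * bNeg + (volume APos).toReal * bPos) :
    aNeg = bNeg ∧ aPos = bPos :=
  stmt17_general Ω hΩb f m M sL sU hanti₁ hanti₂ ANeg APos hunion hANegpos aNeg aPos bNeg bPos haNeg
    haPos hbNeg hbPos hfa hfb hmass
end
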